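/- Characterization of the cohesive proportional sharing operator (Corollary B.1(2)): Let Φ be an operator assigning to each f ∈ F_+ a solution Φ(f) : V_+ → ℝ^N such that Σ_{i∈N} Φ_i(f)(v) = v* for every v ∈ V_+ (cohesive efficiency), where v* = max_{P} Σ_{T∈P} v(T) over all partitions P of N. Then Φ satisfies (ET) and (EES) and, for every f ∈ F_+, Φ(f) satisfies (f-IECoR), if and only if for every f ∈ F_+, every v ∈ V_+ and every i ∈ N, Φ_i(f)(v) = (f_i(v)/Σ_{k∈N} f_k(v))·v*. -/

import Mathlib

/-!
Splicing two positive solutions (use `f` at the game `v` and `f'` elsewhere) and applying (EES)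
at both ends and (f-IECoR) in the middle shows that `Φ_i(f)(v)` depends only on the cohesive ratio
`v* / Σ_k f_k(v)` and on `f_i(v)`. When `f_i(v) = t > 0`, the same ratio and payoff are realised by
the solution constantly equal to `t` on a suitable additive game, where (ET) and cohesive efficiency
force the equal split. When `f_i(v) ≤ 0`, (EES) lets us make every other payoff at `v` positive
without changing the total, and efficiency then determines the payoff of `i`.
-/

namespace Stmt8

/-- A TU-game on the player set `N`: a function on coalitions vanishing at `∅`. -/
abbrev Game (N : Type*) := {v : Finset N → ℝ // v ∅ = 0}

variable (N : Type*) [Fintype N] [DecidableEq N]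

/-- `V₊`: TU-games whose sum of individual worths is strictly positive. -/
abbrev GamePos := {v : Game N // 0 < ∑ k, v.1 {k}}

/-- `F₊`: positive solutions, i.e. maps on `V₊` whose payoffs always have a
strictly positive sum. -/
abbrev SolPos := {f : GamePos N → N → ℝ // ∀ v, 0 < ∑ k, f v k}

variable {N}

/-- `P` is a partition of the player set `S`. -/
def IsPartition (S : Finset N) (P : Finset (Finset N)) : Prop :=
  (∀ C ∈ P, C.Nonempty) ∧
  (∀ C ∈ P, ∀ C' ∈ P, C ≠ C' → Disjoint C C') ∧
  P.biUnion id = S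

/-- The trivial coalition structure `{N}` is a partition of `N`. -/
theorem isPartition_singleton [Nonempty N] :
    IsPartition (Finset.univ : Finset N) ({Finset.univ} : Finset (Finset N)) := by
  refine ⟨?_, ?_, ?_⟩
  · intro C hC
    rw [Finset.mem_singleton] at hC
    subst hC
    exact Finset.univ_nonempty
  · intro C hC C' hC' hne
    rw [Finset.mem_singleton] at hC hC'
    subst hC; subst hC'
    exact absurd rfl hne
  · rw [Finset.singleton_biUnion]; rfl

/-- The cohesive worth `v* = max_{P} Σ_{T ∈ P} v(T)`, the maximum over all
partitions `P` of `N` of the total worth of the blocks. -/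
noncomputable def cohesiveWorth [Nonempty N] (v : Game N) : ℝ :=
  letI : DecidablePred (IsPartition (Finset.univ : Finset N)) := Classical.decPred _
  ((Finset.univ : Finset (Finset (Finset N))).filter
      (IsPartition (Finset.univ : Finset N))).sup'
    ⟨{Finset.univ}, by
      simp only [Finset.mem_filter, Finset.mem_univ, true_and]
      exact isPartition_singleton⟩
    (fun P => ∑ T ∈ P, v.1 T)

/-- Equal treatment (ET) for an operator on `F₊`. -/
def ET (Φ : SolPos N → GamePos N → N → ℝ) : Prop :=
  ∀ (f : SolPos N) (i j : N), (∀ v, f.1 v i = f.1 v j) → ∀ v, Φ f v i = Φ f v j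

/-- Equality for equal surplus (EES) for an operator on `F₊`. -/
def EES (Φ : SolPos N → GamePos N → N → ℝ) : Prop :=
  ∀ (f f' : SolPos N) (v : GamePos N) (i : N),
    (∑ k, f.1 v k) = (∑ k, f'.1 v k) → f.1 v i = f'.1 v i → Φ f v i = Φ f' v i

/-- The `f`-individualistic property for equal cohesive ratio (`f`-IECoR). -/
def IECoR [Nonempty N] (f : SolPos N) (φ : GamePos N → N → ℝ) : Prop :=
  ∀ (v w : GamePos N) (i : N),
    cohesiveWorth v.1 / (∑ k, f.1 v k) = cohesiveWorth w.1 / (∑ k, f.1 w k) →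
    f.1 v i = f.1 w i → φ v i = φ w i


end Stmt8

namespace Stmt8

variable {N : Type*} [Fintype N]

def additiveGame (g : N → ℝ) : Game N := ⟨fun S => ∑ k ∈ S, g k, Finset.sum_empty⟩

theorem sum_singleton_additiveGame (g : N → ℝ) : ∑ k, (additiveGame g).1 {k} = ∑ k, g k := by
  simp [additiveGame]

def SolPos.const (x : N → ℝ) (hx : 0 < ∑ k, x k) : SolPos N := ⟨fun _ => x, fun _ => hx⟩

open Classical in
noncomputable def SolPos.update (f : SolPos N) (v : GamePos N) (x : N → ℝ)
    (hx : 0 < ∑ k, x k) : SolPos N :=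
  ⟨Function.update f.1 v x, fun u => by
    rcases eq_or_ne u v with rfl | hu
    · simpa using hx
    · simpa [hu] using f.2 u⟩

theorem SolPos.update_apply_self (f : SolPos N) (v : GamePos N) (x : N → ℝ)
    (hx : 0 < ∑ k, x k) : (f.update v x hx).1 v = x :=
  Function.update_self ..

theorem SolPos.update_apply_of_ne (f : SolPos N) {v w : GamePos N} (h : w ≠ v) (x : N → ℝ)
    (hx : 0 < ∑ k, x k) : (f.update v x hx).1 w = f.1 w :=
  Function.update_of_ne h ..

variable [DecidableEq N]

theorem exists_sum_eq_forall_ne_pos {x : N → ℝ} (hx : 0 < ∑ k, x k) {i : N} (hi : x i ≤ 0) :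
    ∃ y : N → ℝ, y i = x i ∧ ∑ k, y k = ∑ k, x k ∧ ∀ j ≠ i, 0 < y j := by
  have hsplit := Finset.add_sum_erase _ x (Finset.mem_univ i)
  have hne : (Finset.univ.erase i).Nonempty := by
    by_contra h
    rw [Finset.not_nonempty_iff_eq_empty.mp h, Finset.sum_empty, add_zero] at hsplit
    linarith
  have hm : (0 : ℝ) < (Finset.univ.erase i).card := Nat.cast_pos.mpr hne.card_pos
  set r := (∑ k, x k - x i) / (Finset.univ.erase i).card
  have hr : 0 < r := div_pos (by linarith) hm
  refine ⟨Function.update (fun _ => r) i (x i), Function.update_self .., ?_,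
    fun j hj => by simpa [Function.update_of_ne hj] using hr⟩
  rw [Finset.sum_update_of_mem (Finset.mem_univ i), ← Finset.erase_eq, Finset.sum_const,
    nsmul_eq_mul, mul_div_cancel₀ _ hm.ne']
  ring

theorem isPartition_image_singleton :
    IsPartition (Finset.univ : Finset N) (Finset.univ.image fun k => ({k} : Finset N)) := by
  refine ⟨?_, ?_, ?_⟩
  · simp
  · simp only [Finset.mem_image, Finset.mem_univ, true_and]
    rintro _ ⟨k, rfl⟩ _ ⟨k', rfl⟩ hne
    exact Finset.disjoint_singleton.mpr fun h => hne (h ▸ rfl)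
  · ext; simp

theorem sum_additiveGame_of_isPartition (g : N → ℝ) {P : Finset (Finset N)}
    (hP : IsPartition (Finset.univ : Finset N) P) :
    ∑ T ∈ P, (additiveGame g).1 T = ∑ k, g k := by
  rw [← hP.2.2, Finset.sum_biUnion (t := id) hP.2.1]
  rfl

section Characterization

variable [Nonempty N]

theorem le_cohesiveWorth (v : Game N) {P : Finset (Finset N)}
    (hP : IsPartition (Finset.univ : Finset N) P) : ∑ T ∈ P, v.1 T ≤ cohesiveWorth v := by
  classical
  exact Finset.le_sup' (fun P => ∑ T ∈ P, v.1 T) (Finset.mem_filter.mpr ⟨Finset.mem_univ _, hP⟩)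

theorem cohesiveWorth_le {v : Game N} {c : ℝ}
    (h : ∀ P, IsPartition (Finset.univ : Finset N) P → ∑ T ∈ P, v.1 T ≤ c) :
    cohesiveWorth v ≤ c := by
  classical
  exact Finset.sup'_le _ _ fun P hP => h P (Finset.mem_filter.mp hP).2

theorem sum_singleton_le_cohesiveWorth (v : Game N) : ∑ k, v.1 {k} ≤ cohesiveWorth v := by
  have h := le_cohesiveWorth v (isPartition_image_singleton (N := N))
  rwa [Finset.sum_image fun _ _ _ _ h => Finset.singleton_injective h] at h

theorem cohesiveWorth_pos (v : GamePos N) : 0 < cohesiveWorth v.1 :=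
  v.2.trans_le (sum_singleton_le_cohesiveWorth v.1)

theorem cohesiveWorth_additiveGame (g : N → ℝ) :
    cohesiveWorth (additiveGame g) = ∑ k, g k :=
  le_antisymm (cohesiveWorth_le fun _ hP => (sum_additiveGame_of_isPartition g hP).le)
    ((sum_additiveGame_of_isPartition g isPartition_singleton).symm.le.trans
      (le_cohesiveWorth _ isPartition_singleton))

variable {Φ : SolPos N → GamePos N → N → ℝ}

theorem apply_eq_of_cohesiveRatio_eq (hEES : EES Φ) (hIE : ∀ f, IECoR f (Φ f))
    {f f' : SolPos N} {v w : GamePos N} {i : N}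
    (hr : cohesiveWorth v.1 / ∑ k, f.1 v k = cohesiveWorth w.1 / ∑ k, f'.1 w k)
    (hi : f.1 v i = f'.1 w i) : Φ f v i = Φ f' w i := by
  rcases eq_or_ne w v with rfl | hwv
  · rw [div_eq_div_iff (f.2 w).ne' (f'.2 w).ne'] at hr
    exact hEES f f' w i (mul_left_cancel₀ (cohesiveWorth_pos w).ne' hr).symm hi
  set g := f'.update v (f.1 v) (f.2 v)
  have hgv : g.1 v = f.1 v := SolPos.update_apply_self ..
  have hgw : g.1 w = f'.1 w := SolPos.update_apply_of_ne _ hwv ..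
  calc Φ f v i = Φ g v i := hEES f g v i (by rw [hgv]) (by rw [hgv])
    _ = Φ g w i := hIE g v w i (by rw [hgv, hgw, hr]) (by rw [hgv, hgw, hi])
    _ = Φ f' w i := hEES g f' w i (by rw [hgw]) (by rw [hgw])

theorem apply_const_eq (hEff : ∀ f v, ∑ i, Φ f v i = cohesiveWorth v.1) (hET : ET Φ)
    {t : ℝ} (ht : 0 < ∑ _k : N, t) (w : GamePos N) (i : N) :
    Φ (SolPos.const (fun _ => t) ht) w i = cohesiveWorth w.1 / Fintype.card N := by
  have hsum := hEff (SolPos.const (fun _ => t) ht) w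
  rw [Finset.sum_congr rfl fun j _ => hET _ j i (fun _ => rfl) w, Finset.sum_const,
    Finset.card_univ, nsmul_eq_mul] at hsum
  rw [← hsum, mul_div_cancel_left₀ _ (Nat.cast_ne_zero.mpr Fintype.card_ne_zero)]

theorem apply_eq_of_pos (hEff : ∀ f v, ∑ i, Φ f v i = cohesiveWorth v.1) (hET : ET Φ)
    (hEES : EES Φ) (hIE : ∀ f, IECoR f (Φ f)) {f : SolPos N} {v : GamePos N} {i : N}
    (hi : 0 < f.1 v i) : Φ f v i = (f.1 v i / ∑ k, f.1 v k) * cohesiveWorth v.1 := by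
  have hs := f.2 v
  have hV := cohesiveWorth_pos v
  have hn : (0 : ℝ) < Fintype.card N := Nat.cast_pos.mpr Fintype.card_pos
  set c := f.1 v i / (∑ k, f.1 v k) * cohesiveWorth v.1
  have hc : 0 < c := by positivity
  have hsum_c : ∑ _k : N, c = Fintype.card N * c := by simp
  have hsum_t : ∑ _k : N, f.1 v i = Fintype.card N * f.1 v i := by simp
  -- on `w` the constant solution `f_i(v)` has ratio `n c / (n f_i(v)) = v* / Σ_k f_k(v)`
  let w : GamePos N := ⟨additiveGame fun _ => c, by
    rw [sum_singleton_additiveGame, hsum_c]; positivity⟩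
  have hw : cohesiveWorth w.1 = Fintype.card N * c := by
    rw [cohesiveWorth_additiveGame, hsum_c]
  have ht : 0 < ∑ _k : N, f.1 v i := by rw [hsum_t]; positivity
  calc Φ f v i = Φ (SolPos.const (fun _ => f.1 v i) ht) w i := by
        refine apply_eq_of_cohesiveRatio_eq hEES hIE ?_ rfl
        simp only [SolPos.const, hw, hsum_t, c]
        field_simp
    _ = c := by rw [apply_const_eq hEff hET, hw, mul_div_cancel_left₀ _ hn.ne']

theorem apply_eq_of_forall_ne_pos (hEff : ∀ f v, ∑ i, Φ f v i = cohesiveWorth v.1)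
    (hET : ET Φ) (hEES : EES Φ) (hIE : ∀ f, IECoR f (Φ f)) {f : SolPos N} {v : GamePos N}
    {i : N} (hpos : ∀ j ≠ i, 0 < f.1 v j) :
    Φ f v i = (f.1 v i / ∑ k, f.1 v k) * cohesiveWorth v.1 := by
  have hrest : ∑ j ∈ Finset.univ.erase i, Φ f v j =
      (∑ j ∈ Finset.univ.erase i, f.1 v j) / (∑ k, f.1 v k) * cohesiveWorth v.1 := by
    rw [Finset.sum_div, Finset.sum_mul]
    exact Finset.sum_congr rfl fun j hj =>
      apply_eq_of_pos hEff hET hEES hIE (hpos j (Finset.ne_of_mem_erase hj))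
  have hΦ := Finset.add_sum_erase _ (Φ f v) (Finset.mem_univ i)
  have hf := Finset.add_sum_erase _ (f.1 v) (Finset.mem_univ i)
  rw [hrest, hEff] at hΦ
  have hs := (f.2 v).ne'
  rw [← hf] at hΦ hs ⊢
  field_simp at hΦ ⊢
  linarith

theorem apply_eq_proportional (hEff : ∀ f v, ∑ i, Φ f v i = cohesiveWorth v.1)
    (hET : ET Φ) (hEES : EES Φ) (hIE : ∀ f, IECoR f (Φ f)) (f : SolPos N) (v : GamePos N)
    (i : N) : Φ f v i = (f.1 v i / ∑ k, f.1 v k) * cohesiveWorth v.1 := by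
  rcases lt_or_ge 0 (f.1 v i) with hi | hi
  · exact apply_eq_of_pos hEff hET hEES hIE hi
  obtain ⟨y, hyi, hysum, hypos⟩ := exists_sum_eq_forall_ne_pos (f.2 v) hi
  set g := f.update v y (hysum ▸ f.2 v)
  have hgv : g.1 v = y := SolPos.update_apply_self ..
  calc Φ f v i = Φ g v i := hEES f g v i (by rw [hgv, hysum]) (by rw [hgv, hyi])
    _ = (g.1 v i / ∑ k, g.1 v k) * cohesiveWorth v.1 :=
        apply_eq_of_forall_ne_pos hEff hET hEES hIE (hgv ▸ hypos)
    _ = (f.1 v i / ∑ k, f.1 v k) * cohesiveWorth v.1 := by rw [hgv, hyi, hysum]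

end Characterization

/-- Corollary B.1(2): a cohesively efficient operator on `F₊` satisfies (ET),
(EES), and `Φ(f)` satisfies (`f`-IECoR) for every `f ∈ F₊`, iff `Φ` is the
cohesive proportional sharing operator. -/
theorem cohesive_ps_operator_characterization [Nonempty N]
    (Φ : SolPos N → GamePos N → N → ℝ)
    (hEff : ∀ (f : SolPos N) (v : GamePos N), ∑ i, Φ f v i = cohesiveWorth v.1) :
    (ET Φ ∧ EES Φ ∧ ∀ f : SolPos N, IECoR f (Φ f)) ↔
      (∀ (f : SolPos N) (v : GamePos N) (i : N),
        Φ f v i = (f.1 v i / ∑ k, f.1 v k) * cohesiveWorth v.1) := by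
  refine ⟨fun ⟨hET, hEES, hIE⟩ => apply_eq_proportional hEff hET hEES hIE, fun h => ?_⟩
  refine ⟨fun f i j hij v => by rw [h, h, hij v], fun f f' v i hs hi => by rw [h, h, hs, hi],
    fun f v w i hr hi => ?_⟩
  rw [h, h, div_mul_comm, hr, hi, ← div_mul_comm]

end Stmt8
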